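/- Let v be a vertex of a monotone polytope P ⊆ ℝ^n such that every edge of P incident to v has lattice length at least n. Then every edge of P incident to v has lattice length equal to n or to n + 1. -/

import Mathlib

open Finset

/-- Real dot product of an integer vector with a real vector. -/
def dotZ {n : ℕ} (u : Fin n → ℤ) (x : Fin n → ℝ) : ℝ := ∑ i, (u i : ℝ) * x i

/-- Real dot product. -/
def dotR {n : ℕ} (u x : Fin n → ℝ) : ℝ := ∑ i, u i * x i

/-- A point of `ℝ^n` is a lattice point if all its coordinates are integers. -/
def IsLatticePt {n : ℕ} (x : Fin n → ℝ) : Prop := ∀ i, ∃ m : ℤ, x i = (m : ℝ)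

/-- A (full-dimensional) lattice polytope: the convex hull of a finite set of
lattice points whose affine span is all of `ℝ^n`. -/
def IsLatticePolytope {n : ℕ} (P : Set (Fin n → ℝ)) : Prop :=
  ∃ V : Finset (Fin n → ℝ), (∀ v ∈ V, IsLatticePt v) ∧
    P = convexHull ℝ (V : Set (Fin n → ℝ)) ∧ affineSpan ℝ P = ⊤

/-- `F` is an (exposed) face of `P`: the set of maximizers over `P` of some
linear functional. -/
def IsFaceOf {n : ℕ} (P F : Set (Fin n → ℝ)) : Prop :=
  ∃ u : Fin n → ℝ, F = {x ∈ P | ∀ y ∈ P, dotR u y ≤ dotR u x}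

/-- The dimension of a subset of `ℝ^n` (dimension of its affine hull). -/
noncomputable def dimSet {n : ℕ} (F : Set (Fin n → ℝ)) : ℕ :=
  Module.finrank ℝ (vectorSpan ℝ F)

/-- A facet of `P`: a nonempty face of dimension `n - 1`. -/
def IsFacetOf {n : ℕ} (P F : Set (Fin n → ℝ)) : Prop :=
  IsFaceOf P F ∧ F.Nonempty ∧ dimSet F + 1 = n

/-- A vertex of `P`: a point such that `{v}` is a face. -/
def IsVertexOf {n : ℕ} (P : Set (Fin n → ℝ)) (v : Fin n → ℝ) : Prop :=
  IsFaceOf P {v}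

/-- An edge of `P`: a face which is a nondegenerate segment. -/
def IsEdgeOf {n : ℕ} (P E : Set (Fin n → ℝ)) : Prop :=
  IsFaceOf P E ∧ ∃ a b : Fin n → ℝ, a ≠ b ∧ E = segment ℝ a b

/-- An integer vector is primitive if the gcd of its coordinates is 1. -/
def IsPrimitiveZ {n : ℕ} (u : Fin n → ℤ) : Prop := Finset.univ.gcd u = 1

/-- `u` is the primitive outer normal of the facet `F` of `P`. -/
def IsFacetNormal {n : ℕ} (P F : Set (Fin n → ℝ)) (u : Fin n → ℤ) : Prop :=
  IsPrimitiveZ u ∧ IsFacetOf P F ∧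
    F = {x ∈ P | ∀ y ∈ P, dotZ u y ≤ dotZ u x}

/-- `u` is the central normal vector of the face `G` of `P`: the sum of the
primitive outer normals of all the facets of `P` containing `G`. -/
def IsCentralNormal {n : ℕ} (P G : Set (Fin n → ℝ)) (u : Fin n → ℤ) : Prop :=
  ∃ (m : ℕ) (Fs : Fin m → Set (Fin n → ℝ)) (us : Fin m → Fin n → ℤ),
    Function.Injective Fs ∧
    (∀ i, G ⊆ Fs i ∧ IsFacetNormal P (Fs i) (us i)) ∧
    (∀ F, IsFacetOf P F → G ⊆ F → ∃ i, F = Fs i) ∧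
    u = ∑ i, us i

/-- The lattice length of the segment from `a` to `b`. -/
def LatticeLength {n : ℕ} (a b : Fin n → ℝ) (ℓ : ℕ) : Prop :=
  ∃ d : Fin n → ℤ, IsPrimitiveZ d ∧ ∀ i, b i - a i = (ℓ : ℝ) * (d i : ℝ)

/-- `d` is the primitive integer direction vector of the edge `E` at its
endpoint `v`, pointing away from `v`. -/
def EdgeDirAt {n : ℕ} (v : Fin n → ℝ) (E : Set (Fin n → ℝ)) (d : Fin n → ℤ) : Prop :=
  IsPrimitiveZ d ∧ ∃ w ∈ E, ∃ t : ℝ, 0 < t ∧ ∀ i, w i - v i = t * (d i : ℝ)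

/-- A polytope is smooth (Delzant) if every vertex lies in exactly `n` facets
and the primitive direction vectors of the `n` edges incident to each vertex
form a basis of the lattice `ℤ^n`. -/
def IsSmoothPolytope {n : ℕ} (P : Set (Fin n → ℝ)) : Prop :=
  ∀ v : Fin n → ℝ, IsVertexOf P v →
    (∃ Fs : Fin n → Set (Fin n → ℝ), Function.Injective Fs ∧
      (∀ i, IsFacetOf P (Fs i) ∧ v ∈ Fs i) ∧
      (∀ F, IsFacetOf P F → v ∈ F → ∃ i, F = Fs i)) ∧
    (∃ (E : Fin n → Set (Fin n → ℝ)) (d : Fin n → Fin n → ℤ),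
      Function.Injective E ∧
      (∀ i, IsEdgeOf P (E i) ∧ v ∈ E i ∧ EdgeDirAt v (E i) (d i)) ∧
      (∀ E', IsEdgeOf P E' → v ∈ E' → ∃ i, E' = E i) ∧
      IsUnit (Matrix.det (Matrix.of d)))

/-- A polytope is reflexive if the origin is in its interior and every facet is
supported at value `1` by its primitive outer normal. -/
def IsReflexivePolytope {n : ℕ} (P : Set (Fin n → ℝ)) : Prop :=
  (0 : Fin n → ℝ) ∈ interior P ∧
  ∀ F u, IsFacetNormal P F u → ∀ x ∈ F, dotZ u x = 1

/-- A monotone polytope (= smooth reflexive polytope). -/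
def IsMonotonePolytope {n : ℕ} (P : Set (Fin n → ℝ)) : Prop :=
  IsLatticePolytope P ∧ IsSmoothPolytope P ∧ IsReflexivePolytope P

/-- `F` is a nonempty face of `P` of codimension `k`. -/
def HasCodim {n : ℕ} (P F : Set (Fin n → ℝ)) (k : ℕ) : Prop :=
  IsFaceOf P F ∧ F.Nonempty ∧ dimSet F + k = n

/-- The monotone blow-up `P ∩ {x : u·x ≤ 1}` of a monotone polytope at a face
with central normal `u`. -/
def blowupSet {n : ℕ} (P : Set (Fin n → ℝ)) (u : Fin n → ℤ) : Set (Fin n → ℝ) :=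
  {x ∈ P | dotZ u x ≤ 1}

/-- The region removed from `P` by the monotone blow-up with central normal `u`. -/
def removedRegion {n : ℕ} (P : Set (Fin n → ℝ)) (u : Fin n → ℤ) : Set (Fin n → ℝ) :=
  {x ∈ P | 1 < dotZ u x}

/-- `P` admits a monotone blow-up at its face `F` with central normal `u`:
every vertex of `P` not in `F` satisfies `u·v ≤ 0`, and the blow-up is again a
monotone polytope. -/
def AdmitsMonotoneBlowup {n : ℕ} (P F : Set (Fin n → ℝ)) (u : Fin n → ℤ) : Prop :=
  IsCentralNormal P F u ∧
  (∀ v, IsVertexOf P v → v ∉ F → dotZ u v ≤ 0) ∧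
  IsMonotonePolytope (blowupSet P u)

/-- The monotone simplex `{x : x i ≥ -1 ∀ i, ∑ x i ≤ 1}` in `ℝ^n`. -/
def monotoneSimplex (n : ℕ) : Set (Fin n → ℝ) :=
  {x | (∀ i, -1 ≤ x i) ∧ ∑ i, x i ≤ 1}

/-- `AGL(n,ℤ)`-equivalence of subsets of `ℝ^n`: some map `x ↦ Ax + t` with
`A ∈ GL(n,ℤ)` and `t ∈ ℤ^n` maps `P` onto `Q`. -/
def AGLEquiv {n : ℕ} (P Q : Set (Fin n → ℝ)) : Prop :=
  ∃ (A : Matrix (Fin n) (Fin n) ℤ) (t : Fin n → ℤ), IsUnit A.det ∧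
    (fun x : Fin n → ℝ => fun i => (∑ j, (A i j : ℝ) * x j) + (t i : ℝ)) '' P = Q

/-!
At the vertex `v` the primitive edge directions `d₁, …, dₙ` form a lattice basis, and the
primitive normals `u₁, …, uₙ` of the facets through `v` form the dual basis of `-d`; they are
facet normals because a functional that does not decrease along any edge at a vertex is
minimized there, and reflexivity gives `u_k v = 1`, i.e. `v = -∑ d_j`.

Suppose the `k`-th edge, ending at `w = v + A d_k`, has length `A ≥ n + 2`. The facet normal `U`
at `w` dual to the edge back to `v` has `U d_k = 1` and `∑ U d_j = A - 1`, and `U ≤ 1` at the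
neighbours `v + L_j d_j` gives `L_j U d_j ≤ A`. With `L_j ≥ n` this forces `A = 2n`, `U d_j = 2`
and `L_j = n` for `j ≠ k`. The same construction at the end `b` of an edge `k₁ ≠ k` gives a
facet normal `U'` at `b` with `U' d_k = 0` and `U' d_j = 1` otherwise, so `u_k + U = 2 U'`. Both
`u_k` and `U` equal `1` at `b` and are at most `1` on `P`, hence nonpositive on the edge
directions at `b`; `U'` vanishes on all of them but `-d_{k₁}`, on which `u_k` vanishes. So `u_k`
vanishes on a basis, contradicting `u_k d_k = -1`.
-/

open Matrix

section

variable {n : ℕ}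

lemma dotZ_eq_dotProduct (u : Fin n → ℤ) (x : Fin n → ℝ) :
    dotZ u x = (Int.cast ∘ u) ⬝ᵥ x := rfl

lemma dotZ_add (u : Fin n → ℤ) (x y : Fin n → ℝ) : dotZ u (x + y) = dotZ u x + dotZ u y :=
  dotProduct_add _ x y

lemma dotZ_smul (u : Fin n → ℤ) (c : ℝ) (x : Fin n → ℝ) : dotZ u (c • x) = c * dotZ u x :=
  dotProduct_smul c _ x

lemma dotZ_intCast (u d : Fin n → ℤ) : dotZ u (Int.cast ∘ d) = ((u ⬝ᵥ d : ℤ) : ℝ) := by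
  simp [dotZ, dotProduct]

lemma dotZ_neg_sum_smul {ι : Type*} (s : Finset ι) (c : ι → ℤ) (u : ι → Fin n → ℤ)
    (y : Fin n → ℝ) : dotZ (-∑ k ∈ s, c k • u k) y = -∑ k ∈ s, (c k : ℝ) * dotZ (u k) y := by
  simp only [dotZ, Pi.neg_apply, Finset.sum_apply, Pi.smul_apply, smul_eq_mul, Int.cast_neg,
    Int.cast_sum, Int.cast_mul, neg_mul, Finset.sum_neg_distrib, Finset.sum_mul, Finset.mul_sum,
    mul_assoc]
  rw [Finset.sum_comm]

lemma IsPrimitiveZ.gcd_smul {d : Fin n → ℤ} (hd : IsPrimitiveZ d) (a : ℤ) :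
    univ.gcd (a • d) = |a| := by
  rw [show a • d = fun i => a * d i from rfl, Finset.gcd_mul_left, hd, mul_one,
    Int.abs_eq_normalize]

lemma IsPrimitiveZ.abs_eq_of_smul_eq {d d' : Fin n → ℤ} (hd : IsPrimitiveZ d)
    (hd' : IsPrimitiveZ d') {a b : ℤ} (h : a • d = b • d') : |a| = |b| := by
  rw [← hd.gcd_smul, ← hd'.gcd_smul, h]

lemma IsPrimitiveZ.ne_zero {d : Fin n → ℤ} (hd : IsPrimitiveZ d) : d ≠ 0 := by
  rintro rfl
  exact zero_ne_one (((Finset.gcd_eq_zero_iff).2 fun _ _ => rfl).symm.trans hd)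

lemma LatticeLength.eq_of_eq_add {a b : Fin n → ℝ} {ℓ m : ℕ} (h : LatticeLength a b ℓ)
    {d : Fin n → ℤ} (hd : IsPrimitiveZ d) (hb : b = a + (m : ℝ) • (Int.cast ∘ d)) : ℓ = m := by
  obtain ⟨d', hd', hb'⟩ := h
  have : (ℓ : ℤ) • d' = (m : ℤ) • d := (Int.cast_injective (α := ℝ)).comp_left <| by
    ext i
    have := hb' i
    simp only [hb, Pi.add_apply, Pi.smul_apply, Function.comp_apply, smul_eq_mul,
      add_sub_cancel_left] at this
    simp only [Function.comp_apply, Pi.smul_apply, smul_eq_mul, Int.cast_mul, Int.cast_natCast]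
    linarith
  simpa using hd'.abs_eq_of_smul_eq hd this

lemma isPrimitiveZ_of_dotProduct_eq_one {u d : Fin n → ℤ} (h : u ⬝ᵥ d = 1) : IsPrimitiveZ u := by
  have hdvd : univ.gcd u ∣ 1 :=
    h ▸ Finset.dvd_sum fun i _ => (Finset.gcd_dvd (Finset.mem_univ i)).mul_right _
  rw [IsPrimitiveZ, ← Finset.normalize_gcd, normalize_eq_one]
  exact isUnit_of_dvd_one hdvd

lemma EdgeDirAt.exists_eq_smul {x y : Fin n → ℝ} {d : Fin n → ℤ}
    (h : EdgeDirAt x (segment ℝ x y) d) : ∃ s : ℝ, 0 < s ∧ y - x = s • (Int.cast ∘ d) := by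
  obtain ⟨hd, w, hw, t, ht, hwt⟩ := h
  rw [segment_eq_image'] at hw
  obtain ⟨θ, ⟨hθ₀, -⟩, rfl⟩ := hw
  have hwt : θ • (y - x) = t • (Int.cast ∘ d) := by ext i; simpa using hwt i
  have hθ : θ ≠ 0 := by
    rintro rfl
    rw [zero_smul, eq_comm, smul_eq_zero] at hwt
    refine hd.ne_zero ((Int.cast_injective (α := ℝ)).comp_left ?_)
    simpa [ht.ne'] using hwt
  refine ⟨t / θ, div_pos ht (hθ₀.lt_of_ne' hθ), ?_⟩
  rw [div_eq_inv_mul, mul_smul, ← hwt, inv_smul_smul₀ hθ]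

lemma exists_nat_eq_of_sub_eq_smul {a b : Fin n → ℝ} (ha : IsLatticePt a) (hb : IsLatticePt b)
    {d u : Fin n → ℤ} (hud : u ⬝ᵥ d = 1) {s : ℝ} (hs : 0 < s)
    (h : b - a = s • (Int.cast ∘ d)) : ∃ L : ℕ, 0 < L ∧ s = L := by
  choose za hza using ha
  choose zb hzb using hb
  have hs' : s = ((u ⬝ᵥ (zb - za) : ℤ) : ℝ) := by
    have hba : (b - a : Fin n → ℝ) = Int.cast ∘ (zb - za) := by ext i; simp [hza, hzb]
    have := congrArg (dotZ u) h
    rw [hba, dotZ_intCast, dotZ_smul, dotZ_intCast, hud] at this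
    simpa using this.symm
  rw [hs'] at hs ⊢
  have hpos : 0 < u ⬝ᵥ (zb - za) := by exact_mod_cast hs
  refine ⟨(u ⬝ᵥ (zb - za)).toNat, by omega, ?_⟩
  exact_mod_cast (Int.toNat_of_nonneg hpos.le).symm

end

open Topology

section Faces

variable {n : ℕ}

def supportFace (P : Set (Fin n → ℝ)) (g : Fin n → ℝ) : Set (Fin n → ℝ) :=
  {x ∈ P | ∀ y ∈ P, g ⬝ᵥ y ≤ g ⬝ᵥ x}

lemma isFaceOf_iff {P F : Set (Fin n → ℝ)} : IsFaceOf P F ↔ ∃ g, F = supportFace P g :=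
  Iff.rfl

lemma supportFace_subset (P : Set (Fin n → ℝ)) (g : Fin n → ℝ) : supportFace P g ⊆ P :=
  fun _ hx => hx.1

lemma isLinearMap_dotProduct (g : Fin n → ℝ) : IsLinearMap ℝ (g ⬝ᵥ ·) :=
  ⟨dotProduct_add g, fun c x => dotProduct_smul c g x⟩

lemma dotProduct_le_of_mem_convexHull {s : Set (Fin n → ℝ)} {g : Fin n → ℝ} {M : ℝ}
    (h : ∀ y ∈ s, g ⬝ᵥ y ≤ M) {z : Fin n → ℝ} (hz : z ∈ convexHull ℝ s) : g ⬝ᵥ z ≤ M :=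
  convexHull_min h (convex_halfSpace_le (isLinearMap_dotProduct g) M) hz

lemma dotProduct_eq_of_mem_convexHull {s : Set (Fin n → ℝ)} {g : Fin n → ℝ} {M : ℝ}
    (h : ∀ y ∈ s, g ⬝ᵥ y = M) {z : Fin n → ℝ} (hz : z ∈ convexHull ℝ s) : g ⬝ᵥ z = M :=
  convexHull_min h (convex_hyperplane (isLinearMap_dotProduct g) M) hz

noncomputable def maximizers (V : Finset (Fin n → ℝ)) (g : Fin n → ℝ) : Finset (Fin n → ℝ) :=
  V.filter fun y => ∀ z ∈ V, g ⬝ᵥ z ≤ g ⬝ᵥ y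

section Maximizers

variable {V : Finset (Fin n → ℝ)} {g : Fin n → ℝ}

lemma mem_maximizers {y : Fin n → ℝ} :
    y ∈ maximizers V g ↔ y ∈ V ∧ ∀ z ∈ V, g ⬝ᵥ z ≤ g ⬝ᵥ y :=
  Finset.mem_filter

lemma maximizers_subset (V : Finset (Fin n → ℝ)) (g : Fin n → ℝ) : maximizers V g ⊆ V :=
  Finset.filter_subset _ _

lemma maximizers_nonempty (hV : V.Nonempty) (g : Fin n → ℝ) : (maximizers V g).Nonempty :=
  let ⟨y, hy, hmax⟩ := V.exists_max_image (g ⬝ᵥ ·) hV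
  ⟨y, mem_maximizers.2 ⟨hy, hmax⟩⟩

lemma dotProduct_eq_of_mem_maximizers {y z : Fin n → ℝ} (hy : y ∈ maximizers V g)
    (hz : z ∈ maximizers V g) : g ⬝ᵥ y = g ⬝ᵥ z :=
  le_antisymm ((mem_maximizers.1 hz).2 y (mem_maximizers.1 hy).1)
    ((mem_maximizers.1 hy).2 z (mem_maximizers.1 hz).1)

end Maximizers

lemma supportFace_convexHull (V : Finset (Fin n → ℝ)) (g : Fin n → ℝ) :
    supportFace (convexHull ℝ ↑V) g = convexHull ℝ ↑(maximizers V g) := by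
  apply Set.Subset.antisymm
  · rintro _ ⟨hz, hmax⟩
    obtain ⟨w, hw₀, hw₁, rfl⟩ := Finset.mem_convexHull.1 hz
    set M := g ⬝ᵥ V.centerMass w id
    have hle : ∀ y ∈ V, g ⬝ᵥ y ≤ M := fun y hy => hmax y (subset_convexHull ℝ _ hy)
    -- `M` is the `w`-average of the values `g ⬝ᵥ y`, so the weight lives on the maximizers
    have hsum : ∑ y ∈ V, w y * (M - g ⬝ᵥ y) = 0 := by
      have : M = ∑ y ∈ V, w y * g ⬝ᵥ y := by
        simp [M, Finset.centerMass_eq_of_sum_1 _ _ hw₁, dotProduct_sum, dotProduct_smul]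
      simp only [mul_sub, Finset.sum_sub_distrib, ← Finset.sum_mul, hw₁, one_mul, ← this,
        sub_self]
    have hw : ∀ y ∈ V, y ∉ maximizers V g → w y = 0 := by
      intro y hy hy'
      have := (Finset.sum_eq_zero_iff_of_nonneg fun y hy =>
        mul_nonneg (hw₀ y hy) (sub_nonneg.2 (hle y hy))).1 hsum y hy
      refine (mul_eq_zero.1 this).resolve_right fun h => hy' (mem_maximizers.2 ⟨hy, ?_⟩)
      exact fun z hz => by linarith [hle z hz]
    rw [← Finset.centerMass_subset id (maximizers_subset V g) hw]
    refine Finset.centerMass_id_mem_convexHull _ (fun y hy => hw₀ y (maximizers_subset V g hy)) ?_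
    rw [Finset.sum_subset (maximizers_subset V g) hw, hw₁]
    exact one_pos
  · intro z hz
    obtain ⟨y₀, hy₀⟩ : (maximizers V g).Nonempty := by
      by_contra h
      simp [Finset.not_nonempty_iff_eq_empty.1 h] at hz
    have hz' : g ⬝ᵥ z = g ⬝ᵥ y₀ :=
      dotProduct_eq_of_mem_convexHull (fun y hy => dotProduct_eq_of_mem_maximizers hy hy₀) hz
    refine ⟨convexHull_mono (Finset.coe_subset.2 (maximizers_subset V g)) hz, fun y hy => ?_⟩
    exact hz' ▸ dotProduct_le_of_mem_convexHull (mem_maximizers.1 hy₀).2 hy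

lemma exists_pos_forall_dotProduct_lt {V : Finset (Fin n → ℝ)} {g z₀ : Fin n → ℝ}
    (hz₀ : z₀ ∈ maximizers V g) (g' : Fin n → ℝ) :
    ∃ ε > 0, ∀ y ∈ V \ maximizers V g, g ⬝ᵥ y + ε * g' ⬝ᵥ y < g ⬝ᵥ z₀ + ε * g' ⬝ᵥ z₀ := by
  have hev : ∀ᶠ ε in 𝓝 (0 : ℝ), ∀ y ∈ V \ maximizers V g,
      g ⬝ᵥ y + ε * g' ⬝ᵥ y < g ⬝ᵥ z₀ + ε * g' ⬝ᵥ z₀ := by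
    refine (Filter.eventually_all_finset _).2 fun y hy => ?_
    obtain ⟨hyV, hyW⟩ := Finset.mem_sdiff.1 hy
    refine ContinuousAt.eventually_lt (by fun_prop) (by fun_prop) ?_
    simp only [zero_mul, add_zero]
    by_contra! h
    exact hyW (mem_maximizers.2 ⟨hyV, fun z hz => ((mem_maximizers.1 hz₀).2 z hz).trans h⟩)
  obtain ⟨ε, hε, hεpos⟩ :=
    ((hev.filter_mono nhdsWithin_le_nhds).and (self_mem_nhdsWithin (s := Set.Ioi 0))).exists
  exact ⟨ε, hεpos, hε⟩

/-- A small perturbation `g + ε • g'` of `g` picks out the `g'`-face of the `g`-face. -/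
lemma exists_maximizers_eq_maximizers_maximizers (V : Finset (Fin n → ℝ)) (g g' : Fin n → ℝ) :
    ∃ h, maximizers V h = maximizers (maximizers V g) g' := by
  rcases V.eq_empty_or_nonempty with rfl | hV
  · exact ⟨g, rfl⟩
  obtain ⟨z₀, hz₀⟩ := maximizers_nonempty (maximizers_nonempty hV g) g'
  have hz₀W := maximizers_subset _ _ hz₀
  obtain ⟨ε, hεpos, hε⟩ := exists_pos_forall_dotProduct_lt hz₀W g'
  refine ⟨g + ε • g', Finset.ext fun y => ?_⟩
  rw [mem_maximizers (V := maximizers V g), mem_maximizers (V := V)]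
  simp only [add_dotProduct, smul_dotProduct, smul_eq_mul]
  constructor
  · rintro ⟨hyV, hmax⟩
    have hyW : y ∈ maximizers V g := by
      by_contra hyW
      linarith [hε y (Finset.mem_sdiff.2 ⟨hyV, hyW⟩), hmax z₀ (maximizers_subset _ _ hz₀W)]
    refine ⟨hyW, fun z hz => ?_⟩
    have := dotProduct_eq_of_mem_maximizers hyW hz
    have := hmax z (maximizers_subset _ _ hz)
    exact le_of_mul_le_mul_left (by linarith) hεpos
  · rintro ⟨hyW, hmax⟩
    refine ⟨maximizers_subset _ _ hyW, fun z hz => ?_⟩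
    have hy₀ := dotProduct_eq_of_mem_maximizers hyW hz₀W
    by_cases hzW : z ∈ maximizers V g
    · have := dotProduct_eq_of_mem_maximizers hyW hzW
      nlinarith [hmax z hzW]
    · nlinarith [hε z (Finset.mem_sdiff.2 ⟨hz, hzW⟩), hmax z₀ hz₀W]

lemma IsFaceOf.trans {V : Finset (Fin n → ℝ)} {F G : Set (Fin n → ℝ)}
    (hF : IsFaceOf (convexHull ℝ ↑V) F) (hG : IsFaceOf F G) : IsFaceOf (convexHull ℝ ↑V) G := by
  obtain ⟨g, rfl⟩ := isFaceOf_iff.1 hF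
  obtain ⟨g', rfl⟩ := isFaceOf_iff.1 hG
  obtain ⟨h, hh⟩ := exists_maximizers_eq_maximizers_maximizers V g g'
  refine isFaceOf_iff.2 ⟨h, ?_⟩
  rw [supportFace_convexHull, supportFace_convexHull, supportFace_convexHull, hh]

end Faces

section Vertices

variable {n : ℕ}

lemma dotProduct_self_pos {v : Fin n → ℝ} (hv : v ≠ 0) : 0 < v ⬝ᵥ v := by
  simpa using dotProduct_self_star_pos_iff.2 hv

lemma IsVertexOf.mem {P : Set (Fin n → ℝ)} {x : Fin n → ℝ} (hx : IsVertexOf P x) : x ∈ P := by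
  obtain ⟨g, hg⟩ := isFaceOf_iff.1 hx
  exact supportFace_subset P g (hg ▸ rfl)

lemma IsVertexOf.exists_dotProduct_lt {P : Set (Fin n → ℝ)} {x : Fin n → ℝ}
    (hx : IsVertexOf P x) : ∃ f : Fin n → ℝ, ∀ y ∈ P, y ≠ x → f ⬝ᵥ y < f ⬝ᵥ x := by
  obtain ⟨f, hf⟩ := isFaceOf_iff.1 hx
  have hxf : x ∈ supportFace P f := hf ▸ rfl
  refine ⟨f, fun y hy hyx => (hxf.2 y hy).lt_of_ne fun h => hyx ?_⟩
  have : y ∈ supportFace P f := ⟨hy, fun z hz => h ▸ hxf.2 z hz⟩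
  rwa [← hf] at this

lemma IsVertexOf.mem_finset {V : Finset (Fin n → ℝ)} {x : Fin n → ℝ}
    (hx : IsVertexOf (convexHull ℝ ↑V) x) : x ∈ V := by
  obtain ⟨f, hf⟩ := isFaceOf_iff.1 hx
  rw [supportFace_convexHull] at hf
  obtain ⟨y, hy⟩ : (maximizers V f).Nonempty := by
    by_contra h
    simp [Finset.not_nonempty_iff_eq_empty.1 h] at hf
  have : y = x := by simpa [← hf] using subset_convexHull ℝ _ (Finset.mem_coe.2 hy)
  exact this ▸ maximizers_subset V f hy

lemma supportFace_segment {x y : Fin n → ℝ} (hxy : x ≠ y) :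
    supportFace (segment ℝ x y) (y - x) = {y} := by
  have hq := dotProduct_self_pos (sub_ne_zero.2 hxy.symm)
  have hval : ∀ θ : ℝ, (y - x) ⬝ᵥ (x + θ • (y - x)) = (y - x) ⬝ᵥ x + θ * ((y - x) ⬝ᵥ (y - x)) :=
    fun θ => by rw [dotProduct_add, dotProduct_smul, smul_eq_mul]
  have hy : (y - x) ⬝ᵥ y = (y - x) ⬝ᵥ x + (y - x) ⬝ᵥ (y - x) := by
    rw [← dotProduct_add, add_sub_cancel]
  ext z
  constructor
  · rintro ⟨hz, hmax⟩
    rw [segment_eq_image'] at hz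
    obtain ⟨θ, ⟨-, hθ₁⟩, rfl⟩ := hz
    have := hmax y (right_mem_segment ℝ x y)
    dsimp only at this
    rw [hy, hval] at this
    obtain rfl : θ = 1 := le_antisymm hθ₁ (le_of_mul_le_mul_right (by linarith) hq)
    simp
  · rintro rfl
    refine ⟨right_mem_segment ℝ x z, fun z' hz' => ?_⟩
    rw [segment_eq_image'] at hz'
    obtain ⟨θ, ⟨-, hθ₁⟩, rfl⟩ := hz'
    dsimp only
    rw [hy, hval]
    nlinarith

lemma isVertexOf_of_isFaceOf_segment {V : Finset (Fin n → ℝ)} {x y : Fin n → ℝ} (hxy : x ≠ y)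
    (h : IsFaceOf (convexHull ℝ ↑V) (segment ℝ x y)) : IsVertexOf (convexHull ℝ ↑V) y :=
  h.trans (isFaceOf_iff.2 ⟨y - x, (supportFace_segment hxy).symm⟩)

lemma IsVertexOf.eq_or_eq_of_mem_segment {P : Set (Fin n → ℝ)} {x a b : Fin n → ℝ}
    (hx : IsVertexOf P x) (ha : a ∈ P) (hb : b ∈ P) (hxab : x ∈ segment ℝ a b) :
    x = a ∨ x = b := by
  by_contra! h
  obtain ⟨f, hf⟩ := hx.exists_dotProduct_lt
  obtain ⟨α, β, hα, hβ, hαβ, rfl⟩ := mem_openSegment_of_ne_left_right h.1.symm h.2.symm hxab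
  have ha := hf a ha h.1.symm
  have hb := hf b hb h.2.symm
  simp only [dotProduct_add, dotProduct_smul, smul_eq_mul] at ha hb
  have := add_lt_add (mul_lt_mul_of_pos_left ha hα) (mul_lt_mul_of_pos_left hb hβ)
  rw [← add_mul, hαβ, one_mul] at this
  exact this.false

lemma IsEdgeOf.subset {P E : Set (Fin n → ℝ)} (hE : IsEdgeOf P E) : E ⊆ P := by
  obtain ⟨g, hg⟩ := isFaceOf_iff.1 hE.1
  exact hg ▸ supportFace_subset P g

lemma IsEdgeOf.ne_of_eq_segment {P : Set (Fin n → ℝ)} {x y : Fin n → ℝ}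
    (hE : IsEdgeOf P (segment ℝ x y)) : x ≠ y := by
  obtain ⟨-, a, b, hab, h⟩ := hE
  rintro rfl
  rw [segment_same] at h
  exact hab ((h.symm ▸ left_mem_segment ℝ a b : a ∈ ({x} : Set _)).trans
    (h.symm ▸ right_mem_segment ℝ a b : b ∈ ({x} : Set _)).symm)

lemma IsEdgeOf.exists_eq_segment {P E : Set (Fin n → ℝ)} {x : Fin n → ℝ} (hE : IsEdgeOf P E)
    (hx : IsVertexOf P x) (hxE : x ∈ E) : ∃ y, y ≠ x ∧ E = segment ℝ x y := by
  have hsub := hE.subset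
  obtain ⟨-, a, b, hab, rfl⟩ := hE
  rcases hx.eq_or_eq_of_mem_segment (hsub (left_mem_segment ℝ a b))
    (hsub (right_mem_segment ℝ a b)) hxE with rfl | rfl
  · exact ⟨b, hab.symm, rfl⟩
  · exact ⟨a, hab, segment_symm ℝ a x⟩

lemma IsVertexOf.eq_of_isEdgeOf_segment {P : Set (Fin n → ℝ)} {x y z : Fin n → ℝ}
    (hy : IsVertexOf P y) (hxy : IsEdgeOf P (segment ℝ x y)) (h : segment ℝ x y = segment ℝ x z) :
    y = z := by
  have hsub := h ▸ hxy.subset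
  refine (hy.eq_or_eq_of_mem_segment (hsub (left_mem_segment ℝ x z))
    (hsub (right_mem_segment ℝ x z)) (h ▸ right_mem_segment ℝ x y)).resolve_left ?_
  exact hxy.ne_of_eq_segment.symm

end Vertices

section Descent

variable {n : ℕ} {V : Finset (Fin n → ℝ)} {x f : Fin n → ℝ}

lemma isFaceOf_convexHull_maximizers (V : Finset (Fin n → ℝ)) (k : Fin n → ℝ) :
    IsFaceOf (convexHull ℝ ↑V) (convexHull ℝ (maximizers V k : Set (Fin n → ℝ))) :=
  isFaceOf_iff.2 ⟨k, (supportFace_convexHull V k).symm⟩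

/-- Tilting the functional `f` exposing `x` by `h` as far as possible while keeping `x`
maximal produces a face through `x` and some other point of `V`. -/
lemma exists_maximizers_sub_mem (hx : x ∈ V) (hf : ∀ y ∈ V, y ≠ x → f ⬝ᵥ y < f ⬝ᵥ x)
    (hV : ∃ y ∈ V, y ≠ x) (h : Fin n → ℝ) :
    ∃ μ : ℝ, x ∈ maximizers V (μ • f - h) ∧ ∃ y₀ ∈ maximizers V (μ • f - h), y₀ ≠ x := by
  have hV' : (V.erase x).Nonempty := let ⟨y, hy, hyx⟩ := hV; ⟨y, Finset.mem_erase.2 ⟨hyx, hy⟩⟩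
  have hpos : ∀ y ∈ V.erase x, 0 < f ⬝ᵥ x - f ⬝ᵥ y := fun y hy =>
    sub_pos.2 (hf y (Finset.mem_of_mem_erase hy) (Finset.ne_of_mem_erase hy))
  obtain ⟨y₀, hy₀, hmax⟩ := (V.erase x).exists_max_image
    (fun y => (h ⬝ᵥ x - h ⬝ᵥ y) / (f ⬝ᵥ x - f ⬝ᵥ y)) hV'
  set μ := (h ⬝ᵥ x - h ⬝ᵥ y₀) / (f ⬝ᵥ x - f ⬝ᵥ y₀)
  have hval : ∀ y, (μ • f - h) ⬝ᵥ y = μ * f ⬝ᵥ y - h ⬝ᵥ y := fun y => by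
    rw [sub_dotProduct, smul_dotProduct, smul_eq_mul]
  have hle : ∀ y ∈ V, (μ • f - h) ⬝ᵥ y ≤ (μ • f - h) ⬝ᵥ x := by
    intro y hy
    rcases eq_or_ne y x with rfl | hyx
    · rfl
    have hy' := Finset.mem_erase.2 ⟨hyx, hy⟩
    have := (div_le_iff₀ (hpos y hy')).1 (hmax y hy')
    rw [hval, hval]
    linarith
  have hy₀V := Finset.mem_of_mem_erase hy₀
  have heq : (μ • f - h) ⬝ᵥ y₀ = (μ • f - h) ⬝ᵥ x := by
    have := div_mul_cancel₀ (h ⬝ᵥ x - h ⬝ᵥ y₀) (hpos y₀ hy₀).ne'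
    rw [hval, hval]
    linarith
  exact ⟨μ, mem_maximizers.2 ⟨hx, hle⟩, y₀, mem_maximizers.2 ⟨hy₀V, heq ▸ hle⟩,
    Finset.ne_of_mem_erase hy₀⟩

lemma exists_convexHull_eq_segment (hx : x ∈ V) (hf : ∀ y ∈ V, y ≠ x → f ⬝ᵥ y < f ⬝ᵥ x)
    (hV : ∃ y ∈ V, y ≠ x) {c : Fin n → ℝ}
    (hc : ∀ y ∈ V, y ≠ x → y - x = (f ⬝ᵥ x - f ⬝ᵥ y) • c) :
    ∃ z ∈ V, z ≠ x ∧ convexHull ℝ ↑V = segment ℝ x z := by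
  have hV' : (V.erase x).Nonempty := let ⟨y, hy, hyx⟩ := hV; ⟨y, Finset.mem_erase.2 ⟨hyx, hy⟩⟩
  obtain ⟨z, hz, hmax⟩ := (V.erase x).exists_max_image (fun y => f ⬝ᵥ x - f ⬝ᵥ y) hV'
  obtain ⟨hzx, hzV⟩ := Finset.mem_erase.1 hz
  have hDz : 0 < f ⬝ᵥ x - f ⬝ᵥ z := sub_pos.2 (hf z hzV hzx)
  refine ⟨z, hzV, hzx, (convexHull_min ?_ (convex_segment x z)).antisymm
    (segment_subset_convexHull hx hzV)⟩
  intro y hy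
  rcases eq_or_ne y x with rfl | hyx
  · exact left_mem_segment ℝ y z
  have hDy : 0 < f ⬝ᵥ x - f ⬝ᵥ y := sub_pos.2 (hf y hy hyx)
  rw [segment_eq_image']
  refine ⟨(f ⬝ᵥ x - f ⬝ᵥ y) / (f ⬝ᵥ x - f ⬝ᵥ z), ⟨by positivity, ?_⟩, ?_⟩
  · exact (div_le_one hDz).2 (hmax y (Finset.mem_erase.2 ⟨hyx, hy⟩))
  · dsimp only
    rw [hc z hzV hzx, smul_smul, div_mul_cancel₀ _ hDz.ne', ← hc y hy hyx, add_sub_cancel]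

lemma exists_maximizers_ssubset (hx : x ∈ V) (hf : ∀ y ∈ V, y ≠ x → f ⬝ᵥ y < f ⬝ᵥ x)
    {y₁ y₂ : Fin n → ℝ} (hy₁ : y₁ ∈ V) (hy₂ : y₂ ∈ V) (hy₁x : y₁ ≠ x) (hy₂x : y₂ ≠ x)
    (h₁₂ : (f ⬝ᵥ x - f ⬝ᵥ y₁)⁻¹ • (y₁ - x) ≠ (f ⬝ᵥ x - f ⬝ᵥ y₂)⁻¹ • (y₂ - x)) :
    ∃ k, x ∈ maximizers V k ∧ maximizers V k ⊂ V ∧ ∃ y₀ ∈ maximizers V k, y₀ ≠ x := by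
  set h := (f ⬝ᵥ x - f ⬝ᵥ y₁)⁻¹ • (y₁ - x) - (f ⬝ᵥ x - f ⬝ᵥ y₂)⁻¹ • (y₂ - x)
  obtain ⟨μ, hxW, hW⟩ := exists_maximizers_sub_mem hx hf ⟨y₁, hy₁, hy₁x⟩ h
  refine ⟨μ • f - h, hxW, (Finset.ssubset_iff_of_subset (maximizers_subset _ _)).2 ?_, hW⟩
  by_contra! hall
  -- if the cut kept all of `V`, `h` would take the value `-μ` on both normalized directions,
  -- hence `h ⬝ᵥ h = 0`
  have key : ∀ y ∈ V, y ≠ x → h ⬝ᵥ ((f ⬝ᵥ x - f ⬝ᵥ y)⁻¹ • (y - x)) = -μ := by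
    intro y hy hyx
    have hD : f ⬝ᵥ x - f ⬝ᵥ y ≠ 0 := (sub_pos.2 (hf y hy hyx)).ne'
    have := dotProduct_eq_of_mem_maximizers (hall y hy) hxW
    simp only [sub_dotProduct, smul_dotProduct, dotProduct_smul, dotProduct_sub,
      smul_eq_mul] at this ⊢
    field_simp
    linarith
  have : h ⬝ᵥ h = 0 := by
    rw [dotProduct_sub, key y₁ hy₁ hy₁x, key y₂ hy₂ hy₂x, sub_self]
  exact h₁₂ (sub_eq_zero.1 (dotProduct_self_eq_zero.1 this))

lemma dotProduct_lt_of_mem_maximizers_sub (hf : ∀ y ∈ V, y ≠ x → f ⬝ᵥ y < f ⬝ᵥ x)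
    {g : Fin n → ℝ} (hg : ∃ y ∈ V, g ⬝ᵥ y < g ⬝ᵥ x) {μ : ℝ} (hxW : x ∈ maximizers V (μ • f - g))
    {y : Fin n → ℝ} (hy : y ∈ maximizers V (μ • f - g)) (hyx : y ≠ x) : g ⬝ᵥ y < g ⬝ᵥ x := by
  have hμ : 0 < μ := by
    obtain ⟨z, hz, hgz⟩ := hg
    have := (mem_maximizers.1 hxW).2 z hz
    simp only [sub_dotProduct, smul_dotProduct, smul_eq_mul] at this
    by_contra! hμ
    rcases eq_or_ne z x with rfl | hzx
    · exact hgz.false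
    nlinarith [hf z hz hzx]
  have := dotProduct_eq_of_mem_maximizers hy hxW
  simp only [sub_dotProduct, smul_dotProduct, smul_eq_mul] at this
  nlinarith [hf y (maximizers_subset _ _ hy) hyx]

lemma exists_isFaceOf_segment_of_lt (hx : x ∈ V) (hf : ∀ y ∈ V, y ≠ x → f ⬝ᵥ y < f ⬝ᵥ x)
    {g : Fin n → ℝ} (hg : ∃ y ∈ V, g ⬝ᵥ y < g ⬝ᵥ x) :
    ∃ y, g ⬝ᵥ y < g ⬝ᵥ x ∧ IsFaceOf (convexHull ℝ ↑V) (segment ℝ x y) := by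
  induction V using Finset.strongInduction with
  | H V ih =>
  have hV : ∃ y ∈ V, y ≠ x := let ⟨y, hy, hgy⟩ := hg; ⟨y, hy, by rintro rfl; exact hgy.false⟩
  have descend : ∀ k, x ∈ maximizers V k → maximizers V k ⊂ V →
      (∃ y ∈ maximizers V k, g ⬝ᵥ y < g ⬝ᵥ x) →
      ∃ y, g ⬝ᵥ y < g ⬝ᵥ x ∧ IsFaceOf (convexHull ℝ ↑V) (segment ℝ x y) := by
    intro k hxW hWV hgW
    obtain ⟨y, hy, hface⟩ :=
      ih _ hWV hxW (fun y hy => hf y (maximizers_subset _ _ hy)) hgW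
    exact ⟨y, hy, (isFaceOf_convexHull_maximizers V k).trans hface⟩
  -- Cut by `g` first. If that face is all of `V`, then either `V` lies on a segment from `x`,
  -- or cutting by the difference of two normalized directions `(y - x) / (f x - f y)` is proper.
  obtain ⟨μ, hxW, y₀, hy₀W, hy₀x⟩ := exists_maximizers_sub_mem hx hf hV g
  have hlow : ∀ y ∈ maximizers V (μ • f - g), y ≠ x → g ⬝ᵥ y < g ⬝ᵥ x := fun y hy hyx =>
    dotProduct_lt_of_mem_maximizers_sub hf hg hxW hy hyx
  by_cases hWV : maximizers V (μ • f - g) = V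
  swap
  · exact descend _ hxW ((maximizers_subset _ _).ssubset_of_ne hWV) ⟨y₀, hy₀W, hlow y₀ hy₀W hy₀x⟩
  rw [hWV] at hlow
  obtain ⟨y₂, hy₂, hy₂x⟩ := hV
  by_cases hcol : ∀ y ∈ V, y ≠ x →
      y - x = (f ⬝ᵥ x - f ⬝ᵥ y) • ((f ⬝ᵥ x - f ⬝ᵥ y₂)⁻¹ • (y₂ - x))
  · obtain ⟨z, hz, hzx, hVz⟩ := exists_convexHull_eq_segment hx hf ⟨y₂, hy₂, hy₂x⟩ hcol
    refine ⟨z, hlow z hz hzx, hVz ▸ isFaceOf_iff.2 ⟨0, ?_⟩⟩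
    simp [supportFace]
  push Not at hcol
  obtain ⟨y₁, hy₁, hy₁x, h₁₂⟩ := hcol
  obtain ⟨k, hxk, hkV, y, hy, hyx⟩ := exists_maximizers_ssubset hx hf hy₁ hy₂ hy₁x hy₂x
    fun h => h₁₂ (by rw [← h, smul_inv_smul₀ (sub_pos.2 (hf y₁ hy₁ hy₁x)).ne'])
  exact descend k hxk hkV ⟨y, hy, hlow y (maximizers_subset _ _ hy) hyx⟩

lemma IsVertexOf.dotProduct_le_of_forall_isEdgeOf {V : Finset (Fin n → ℝ)} {x : Fin n → ℝ}
    (hx : IsVertexOf (convexHull ℝ ↑V) x) {g : Fin n → ℝ}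
    (hg : ∀ y, IsEdgeOf (convexHull ℝ ↑V) (segment ℝ x y) → g ⬝ᵥ x ≤ g ⬝ᵥ y) :
    ∀ z ∈ convexHull ℝ ↑V, g ⬝ᵥ x ≤ g ⬝ᵥ z := by
  have hxV := hx.mem_finset
  obtain ⟨f, hf⟩ := hx.exists_dotProduct_lt
  by_contra! hz
  obtain ⟨z, hz, hgz⟩ := hz
  have hlow : ∃ y ∈ V, g ⬝ᵥ y < g ⬝ᵥ x := by
    by_contra! h
    exact hgz.not_ge (convexHull_min h (convex_halfSpace_ge (isLinearMap_dotProduct g) _) hz)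
  obtain ⟨y, hgy, hface⟩ := exists_isFaceOf_segment_of_lt hxV
    (fun y hy => hf y (subset_convexHull ℝ _ hy)) hlow
  have hxy : x ≠ y := by rintro rfl; exact hgy.false
  exact hgy.not_ge (hg y ⟨hface, x, y, hxy, rfl⟩)

end Descent

section Facets

variable {n : ℕ}

lemma linearIndependent_of_dotProduct {ι : Type*} [Fintype ι] {c u : ι → Fin n → ℝ}
    (h : ∀ i j, i ≠ j → u i ⬝ᵥ c j = 0) (h' : ∀ i, u i ⬝ᵥ c i ≠ 0) :
    LinearIndependent ℝ c := by
  classical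
  refine Fintype.linearIndependent_iff.2 fun a ha i => ?_
  have := congrArg (u i ⬝ᵥ ·) ha
  simp only [dotProduct_sum, dotProduct_smul, smul_eq_mul, dotProduct_zero] at this
  rwa [Finset.sum_eq_single i (fun j _ hji => by rw [h i j hji.symm, mul_zero])
    (by simp), mul_eq_zero, or_iff_left (h' i)] at this

lemma dimSet_add_one_eq {F : Set (Fin n → ℝ)} {φ : Fin n → ℝ} (hφ : φ ≠ 0)
    (hF : ∀ y ∈ F, ∀ z ∈ F, φ ⬝ᵥ y = φ ⬝ᵥ z) {ι : Type*} [Fintype ι] {c : ι → Fin n → ℝ}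
    (hc : LinearIndependent ℝ c) (hcF : ∀ i, c i ∈ vectorSpan ℝ F)
    (hι : Fintype.card ι + 1 = n) : dimSet F + 1 = n := by
  let ψ : Module.Dual ℝ (Fin n → ℝ) := IsLinearMap.mk' _ (isLinearMap_dotProduct φ)
  have hψ : ψ ≠ 0 := fun h => (dotProduct_self_pos hφ).ne' (LinearMap.congr_fun h φ)
  have hker := Module.Dual.finrank_ker_add_one_of_ne_zero hψ
  rw [Module.finrank_fin_fun] at hker
  have hup : vectorSpan ℝ F ≤ LinearMap.ker ψ := by
    rw [vectorSpan_def, Submodule.span_le]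
    rintro _ ⟨y, hy, z, hz, rfl⟩
    simp [ψ, dotProduct_sub, hF y hy z hz]
  have hlow : Submodule.span ℝ (Set.range c) ≤ vectorSpan ℝ F :=
    Submodule.span_le.2 (Set.range_subset_iff.2 hcF)
  have h₁ := Submodule.finrank_mono hup
  have h₂ := Submodule.finrank_mono hlow
  rw [finrank_span_eq_card hc] at h₂
  rw [dimSet]
  omega


end Facets

section Chart

variable {n : ℕ}

lemma exists_dual_of_isUnit_det {d : Fin n → Fin n → ℤ} (hd : IsUnit (Matrix.of d).det) :
    ∃ u : Fin n → Fin n → ℤ, ∀ k j, u k ⬝ᵥ d j = if k = j then -1 else 0 := by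
  refine ⟨fun k i => -(Matrix.of d)⁻¹ i k, fun k j => ?_⟩
  calc (fun i => -(Matrix.of d)⁻¹ i k) ⬝ᵥ d j = -((Matrix.of d * (Matrix.of d)⁻¹) j k) := by
        simp [dotProduct, Matrix.mul_apply, mul_comm]
    _ = if k = j then -1 else 0 := by
        rw [Matrix.mul_nonsing_inv _ hd, Matrix.one_apply]
        split_ifs <;> simp_all [eq_comm]

/-- The face on which `u` is maximal is a facet, so reflexivity gives the value `1` there. -/
lemma IsReflexivePolytope.dotZ_eq_one {P : Set (Fin n → ℝ)} (hP : IsReflexivePolytope P)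
    {x : Fin n → ℝ} (hxP : x ∈ P) {u : Fin n → ℤ} (hu : IsPrimitiveZ u)
    (hmax : ∀ y ∈ P, dotZ u y ≤ dotZ u x) {ι : Type*} [Fintype ι] {c : ι → Fin n → ℝ}
    (hc : LinearIndependent ℝ c) (hcP : ∀ i, x + c i ∈ P) (hcu : ∀ i, dotZ u (c i) = 0)
    (hι : Fintype.card ι + 1 = n) : dotZ u x = 1 := by
  set F := {y ∈ P | ∀ y' ∈ P, dotZ u y' ≤ dotZ u y}
  have hxF : x ∈ F := ⟨hxP, hmax⟩
  have hF : ∀ y ∈ F, dotZ u y = dotZ u x := fun y hy => (hmax y hy.1).antisymm (hy.2 x hxP)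
  have hcF : ∀ i, x + c i ∈ F := fun i =>
    ⟨hcP i, fun y hy => by rw [dotZ_add, hcu i, add_zero]; exact hmax y hy⟩
  have hφ : (Int.cast ∘ u : Fin n → ℝ) ≠ 0 := fun h =>
    hu.ne_zero ((Int.cast_injective (α := ℝ)).comp_left (by simpa using h))
  have hdim : dimSet F + 1 = n := by
    refine dimSet_add_one_eq hφ (fun y hy z hz => (hF y hy).trans (hF z hz).symm) hc
      (fun i => ?_) hι
    simpa using vsub_mem_vectorSpan ℝ (hcF i) hxF
  exact hP.2 F u ⟨hu, ⟨⟨_, rfl⟩, ⟨x, hxF⟩, hdim⟩, rfl⟩ x hxF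

lemma IsVertexOf.dotZ_le_of_forall_isEdgeOf {V : Finset (Fin n → ℝ)} {x : Fin n → ℝ}
    (hx : IsVertexOf (convexHull ℝ ↑V) x) {ι : Type*} {b : ι → Fin n → ℝ}
    (hb : ∀ E, IsEdgeOf (convexHull ℝ ↑V) E → x ∈ E → ∃ j, E = segment ℝ x (b j))
    {u : Fin n → ℤ} (hub : ∀ j, dotZ u (b j) ≤ dotZ u x) :
    ∀ y ∈ convexHull ℝ ↑V, dotZ u y ≤ dotZ u x := by
  intro y hy
  have := hx.dotProduct_le_of_forall_isEdgeOf (g := -(Int.cast ∘ u)) (fun z hz => ?_) y hy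
  · simpa [neg_dotProduct, dotZ_eq_dotProduct] using this
  obtain ⟨j, hj⟩ := hb _ hz (left_mem_segment ℝ x z)
  have hzv := isVertexOf_of_isFaceOf_segment hz.ne_of_eq_segment hz.1
  rw [hzv.eq_of_isEdgeOf_segment hz hj]
  simpa [neg_dotProduct, dotZ_eq_dotProduct] using hub j

lemma exists_len_of_edgeDirAt {V : Finset (Fin n → ℝ)} (hlat : ∀ v ∈ V, IsLatticePt v)
    {x : Fin n → ℝ} (hx : IsVertexOf (convexHull ℝ ↑V) x) {E : Set (Fin n → ℝ)}
    (hE : IsEdgeOf (convexHull ℝ ↑V) E) (hxE : x ∈ E) {d u : Fin n → ℤ} (hd : EdgeDirAt x E d)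
    (hud : u ⬝ᵥ d = 1) :
    ∃ L : ℕ, 0 < L ∧ E = segment ℝ x (x + (L : ℝ) • (Int.cast ∘ d)) ∧
      IsVertexOf (convexHull ℝ ↑V) (x + (L : ℝ) • (Int.cast ∘ d)) := by
  obtain ⟨y, hyx, rfl⟩ := hE.exists_eq_segment hx hxE
  have hy := isVertexOf_of_isFaceOf_segment hyx.symm hE.1
  obtain ⟨s, hs, hys⟩ := hd.exists_eq_smul
  obtain ⟨L, hL, rfl⟩ :=
    exists_nat_eq_of_sub_eq_smul (hlat x hx.mem_finset) (hlat y hy.mem_finset) hud hs hys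
  refine ⟨L, hL, ?_⟩
  rw [← hys, add_sub_cancel]
  exact ⟨rfl, hy⟩

/-- The `n` edges at a vertex `x` of a smooth polytope, with primitive directions `dir`,
lattice lengths `len` and far endpoints `nbr`, together with the primitive normals of the `n`
facets through `x`, which form the dual basis of `-dir`. -/
structure VertexChart (P : Set (Fin n → ℝ)) (x : Fin n → ℝ) where
  dir : Fin n → Fin n → ℤ
  len : Fin n → ℕ
  nbr : Fin n → Fin n → ℝ
  normal : Fin n → Fin n → ℤ
  dir_primitive : ∀ k, IsPrimitiveZ (dir k)
  len_pos : ∀ k, 0 < len k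
  nbr_eq : ∀ k, nbr k = x + (len k : ℝ) • (Int.cast ∘ dir k)
  isVertexOf_nbr : ∀ k, IsVertexOf P (nbr k)
  isEdgeOf_segment_nbr : ∀ k, IsEdgeOf P (segment ℝ x (nbr k))
  exists_eq_of_isEdgeOf : ∀ E, IsEdgeOf P E → x ∈ E → ∃ k, E = segment ℝ x (nbr k)
  normal_dotProduct_dir : ∀ k j, normal k ⬝ᵥ dir j = if k = j then -1 else 0
  dotZ_normal_le : ∀ k, ∀ y ∈ P, dotZ (normal k) y ≤ 1
  dotZ_normal_self : ∀ k, dotZ (normal k) x = 1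

lemma VertexChart.nonempty {P : Set (Fin n → ℝ)} (hP : IsMonotonePolytope P) {x : Fin n → ℝ}
    (hx : IsVertexOf P x) : Nonempty (VertexChart P x) := by
  obtain ⟨⟨V, hlat, rfl, -⟩, hsmooth, hrefl⟩ := hP
  obtain ⟨-, E, d, -, hE, hcompl, hdet⟩ := hsmooth x hx
  obtain ⟨u, hud⟩ := exists_dual_of_isUnit_det hdet
  have hud' : ∀ k, (-u k) ⬝ᵥ d k = 1 := fun k => by simp [neg_dotProduct, hud]
  have hprim : ∀ k, IsPrimitiveZ (u k) := fun k =>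
    isPrimitiveZ_of_dotProduct_eq_one (d := -d k) (by simp [dotProduct_neg, hud])
  choose L hL hEL hvert using fun k =>
    exists_len_of_edgeDirAt hlat hx (hE k).1 (hE k).2.1 (hE k).2.2 (hud' k)
  have hstep : ∀ k j,
      dotZ (u k) ((L j : ℝ) • (Int.cast ∘ d j)) = if k = j then -(L j : ℝ) else 0 := by
    intro k j
    rw [dotZ_smul, dotZ_intCast, hud]
    split_ifs <;> simp
  have hmax : ∀ k, ∀ y ∈ convexHull ℝ ↑V, dotZ (u k) y ≤ dotZ (u k) x := fun k =>
    hx.dotZ_le_of_forall_isEdgeOf (fun E' hE' hxE' => (hcompl E' hE' hxE').imp fun j hj =>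
      hj.trans (hEL j)) fun j => by rw [dotZ_add, hstep]; split_ifs <;> simp
  have hli : LinearIndependent ℝ fun j => (L j : ℝ) • (Int.cast ∘ d j : Fin n → ℝ) := by
    refine linearIndependent_of_dotProduct (u := fun j => Int.cast ∘ u j)
      (fun i j hij => ?_) (fun i => ?_)
    · change dotZ (u i) _ = 0
      rw [hstep, if_neg hij]
    · change dotZ (u i) _ ≠ 0
      rw [hstep, if_pos rfl]
      simpa using (hL i).ne'
  have hone : ∀ k, dotZ (u k) x = 1 := by
    intro k
    have hcard : Fintype.card {j // j ≠ k} + 1 = n := by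
      rw [Fintype.card_subtype_compl, Fintype.card_fin, Fintype.card_unique]
      have := k.pos
      omega
    exact hrefl.dotZ_eq_one hx.mem (hprim k) (hmax k)
      (hli.comp (fun j : {j // j ≠ k} => j.1) Subtype.val_injective) (fun j => (hvert j).mem)
      (fun j => by simp [hstep, j.2.symm]) hcard
  refine ⟨⟨d, L, fun k => x + (L k : ℝ) • (Int.cast ∘ d k), u, fun k => (hE k).2.2.1, hL,
    fun k => rfl, hvert, fun k => hEL k ▸ (hE k).1, fun E' hE' hxE' => ?_, hud,
    fun k y hy => hone k ▸ hmax k y hy, hone⟩⟩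
  obtain ⟨k, rfl⟩ := hcompl E' hE' hxE'
  exact ⟨k, hEL k⟩

end Chart

section Arithmetic

variable {n : ℕ}

lemma Fin.sum_ite_eq_add (k : Fin n) (a b : ℤ) :
    ∑ j, (if j = k then a else b) = a + (n - 1) * b := by
  rw [Finset.sum_ite, Finset.filter_eq', Finset.filter_ne', if_pos (Finset.mem_univ k),
    Finset.sum_singleton, Finset.sum_const, Finset.card_erase_of_mem (Finset.mem_univ k),
    Finset.card_univ, Fintype.card_fin, nsmul_eq_mul, Nat.cast_pred k.pos]

lemma eq_of_sum_eq_of_le {β γ : Fin n → ℤ} (hle : ∀ j, β j ≤ γ j) (hsum : ∑ j, β j = ∑ j, γ j) :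
    β = γ :=
  funext fun j => (Finset.sum_eq_sum_iff_of_le fun j _ => hle j).1 hsum j (Finset.mem_univ j)

/-- The constraints on the opposite facet normal of an edge of length `≥ n + 2` when all
edges have length `≥ n`. -/
lemma opposite_weights_of_long_edge {L : Fin n → ℕ} {β : Fin n → ℤ} {k : Fin n}
    (hL : ∀ j, n ≤ L j) (hk : n + 2 ≤ L k) (hβk : β k = 1) (hsum : ∑ j, β j = L k - 1)
    (hle : ∀ j, L j * β j ≤ L k) :
    L k = 2 * n ∧ ∀ j, j ≠ k → β j = 2 ∧ L j = n := by
  have hn : 0 < n := k.pos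
  have hnβ : ∀ j, n * β j ≤ if j = k then (n : ℤ) else L k := by
    intro j
    split_ifs with hj
    · simp [hj, hβk]
    · rcases le_or_gt (β j) 0 with h | h
      · nlinarith
      · nlinarith [hle j, hL j]
  have h2n : (L k : ℤ) ≤ 2 * n := by
    have := Finset.sum_le_sum fun j (_ : j ∈ Finset.univ) => hnβ j
    rw [← Finset.mul_sum, hsum, Fin.sum_ite_eq_add] at this
    nlinarith
  have hLk : (L k : ℤ) = 2 * n := by
    refine h2n.antisymm (not_lt.1 fun h => ?_)
    have hβ1 : ∀ j ∈ Finset.univ, β j ≤ 1 := fun j _ => by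
      have : (if j = k then (n : ℤ) else L k) < 2 * n := by split_ifs <;> omega
      nlinarith [hnβ j]
    have := Finset.sum_le_sum hβ1
    simp only [Finset.sum_const, Finset.card_univ, Fintype.card_fin, nsmul_eq_mul,
      mul_one, hsum] at this
    omega
  have hβ : β = fun j => if j = k then 1 else 2 := by
    refine eq_of_sum_eq_of_le (fun j => ?_) (by rw [hsum, Fin.sum_ite_eq_add, hLk]; ring)
    split_ifs with hj
    · rw [hj, hβk]
    · have := hnβ j
      rw [if_neg hj, hLk] at this
      nlinarith
  refine ⟨by exact_mod_cast hLk, fun j hj => ⟨by simp [hβ, hj], ?_⟩⟩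
  have := hle j
  simp only [hβ, if_neg hj, hLk] at this
  have := hL j
  omega

/-- The constraints on the opposite facet normal of an edge of length `n` next to an edge of
length `2 * n`. -/
lemma opposite_weights_of_short_edge {L : Fin n → ℕ} {β : Fin n → ℤ} {k : Fin n}
    (hLk : L k = 2 * n) (hL : ∀ j, j ≠ k → L j = n) (hsum : ∑ j, β j = n - 1)
    (hle : ∀ j, L j * β j ≤ n) : β = fun j => if j = k then 0 else 1 := by
  have hn : 0 < n := k.pos
  refine eq_of_sum_eq_of_le (fun j => ?_) (by rw [hsum, Fin.sum_ite_eq_add]; ring)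
  have := hle j
  split_ifs with hj
  · subst hj
    rw [hLk] at this
    push_cast at this
    nlinarith
  · rw [hL j hj] at this
    nlinarith

end Arithmetic

namespace VertexChart

variable {n : ℕ} {P : Set (Fin n → ℝ)} {x : Fin n → ℝ} (S : VertexChart P x)

lemma dotZ_nbr (φ : Fin n → ℤ) (k : Fin n) :
    dotZ φ (S.nbr k) = dotZ φ x + S.len k * (φ ⬝ᵥ S.dir k : ℤ) := by
  rw [S.nbr_eq, dotZ_add, dotZ_smul, dotZ_intCast]

lemma latticeLength_nbr (k : Fin n) : LatticeLength x (S.nbr k) (S.len k) :=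
  ⟨S.dir k, S.dir_primitive k, fun i => by simp [S.nbr_eq]⟩

lemma exists_nbr_eq {y : Fin n → ℝ} (hy : IsVertexOf P y) (h : IsEdgeOf P (segment ℝ x y)) :
    ∃ k, y = S.nbr k := by
  obtain ⟨k, hk⟩ := S.exists_eq_of_isEdgeOf _ h (left_mem_segment ℝ x y)
  exact ⟨k, hy.eq_of_isEdgeOf_segment h hk⟩

lemma eq_neg_sum_smul_normal (φ : Fin n → ℤ) : φ = -∑ k, (φ ⬝ᵥ S.dir k) • S.normal k := by
  have h : Matrix.of S.normal * (-(Matrix.of S.dir)ᵀ) = 1 := by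
    ext k j
    simp only [Matrix.mul_apply, Matrix.neg_apply, Matrix.transpose_apply, Matrix.of_apply,
      mul_neg, Finset.sum_neg_distrib, ← dotProduct.eq_def, S.normal_dotProduct_dir,
      Matrix.one_apply]
    split_ifs <;> simp
  calc φ = φ ᵥ* (-(Matrix.of S.dir)ᵀ * Matrix.of S.normal) := by rw [mul_eq_one_comm.1 h,
        vecMul_one]
    _ = -∑ k, (φ ⬝ᵥ S.dir k) • S.normal k := by
        rw [← vecMul_vecMul, vecMul_eq_sum]
        simp only [vecMul_neg, vecMul_transpose, Pi.neg_apply, mulVec, of_apply, dotProduct_comm,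
          neg_smul, Finset.sum_neg_distrib]
        rfl

lemma ext_of_dotProduct_dir {φ ψ : Fin n → ℤ} (h : ∀ k, φ ⬝ᵥ S.dir k = ψ ⬝ᵥ S.dir k) :
    φ = ψ := by
  rw [S.eq_neg_sum_smul_normal φ, S.eq_neg_sum_smul_normal ψ]
  simp only [h]

lemma dotZ_self (φ : Fin n → ℤ) : dotZ φ x = -∑ k, ((φ ⬝ᵥ S.dir k : ℤ) : ℝ) := by
  conv_lhs => rw [S.eq_neg_sum_smul_normal φ]
  rw [dotZ_neg_sum_smul]
  simp [S.dotZ_normal_self]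

lemma dotProduct_dir_nonpos {φ : Fin n → ℤ} (hφ : dotZ φ x = 1) (hφP : ∀ y ∈ P, dotZ φ y ≤ 1)
    (k : Fin n) : φ ⬝ᵥ S.dir k ≤ 0 := by
  have := hφP _ (S.isVertexOf_nbr k).mem
  rw [S.dotZ_nbr, hφ] at this
  have hL : (0 : ℝ) < S.len k := by exact_mod_cast S.len_pos k
  have : ((φ ⬝ᵥ S.dir k : ℤ) : ℝ) ≤ 0 := nonpos_of_mul_nonpos_right (by linarith) hL
  exact_mod_cast this

lemma exists_dir_eq_neg (hP : IsMonotonePolytope P) (hx : IsVertexOf P x) (k : Fin n) :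
    ∃ (T : VertexChart P (S.nbr k)) (m : Fin n), T.dir m = -S.dir k := by
  obtain ⟨T⟩ := VertexChart.nonempty hP (S.isVertexOf_nbr k)
  obtain ⟨m, hm⟩ := T.exists_nbr_eq hx (segment_symm ℝ x (S.nbr k) ▸ S.isEdgeOf_segment_nbr k)
  refine ⟨T, m, ?_⟩
  have h : (T.len m : ℤ) • T.dir m = (-(S.len k : ℤ)) • S.dir k :=
    (Int.cast_injective (α := ℝ)).comp_left <| funext fun i => by
      have h₁ := congrFun (T.nbr_eq m) i
      have h₂ := congrFun (S.nbr_eq k) i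
      simp only [← hm, Pi.add_apply, Pi.smul_apply, Function.comp_apply, smul_eq_mul] at h₁ h₂
      simp only [Function.comp_apply, Pi.smul_apply, smul_eq_mul, Int.cast_mul, Int.cast_neg,
        Int.cast_natCast]
      linarith
  have hlen : T.len m = S.len k := by
    simpa using (T.dir_primitive m).abs_eq_of_smul_eq (S.dir_primitive k) h
  rw [hlen, neg_smul, ← smul_neg] at h
  exact smul_right_injective _ (by exact_mod_cast (S.len_pos k).ne') h

/-- The facet normal at the far end of edge `k` dual to the edge back to `x`. -/
lemma opposite_normal {k : Fin n} {T : VertexChart P (S.nbr k)} {m : Fin n}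
    (hm : T.dir m = -S.dir k) :
    T.normal m ⬝ᵥ S.dir k = 1 ∧ dotZ (T.normal m) x = 1 - S.len k ∧
      ∑ j, T.normal m ⬝ᵥ S.dir j = S.len k - 1 ∧
      ∀ j, S.len j * (T.normal m ⬝ᵥ S.dir j) ≤ S.len k := by
  have hk : T.normal m ⬝ᵥ S.dir k = 1 := by
    simpa [hm, dotProduct_neg] using T.normal_dotProduct_dir m m
  have hx : dotZ (T.normal m) x = 1 - S.len k := by
    have := S.dotZ_nbr (T.normal m) k
    rw [T.dotZ_normal_self, hk] at this
    push_cast at this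
    linarith
  refine ⟨hk, hx, ?_, fun j => ?_⟩
  · have := S.dotZ_self (T.normal m)
    rw [hx] at this
    have h : ((∑ j, T.normal m ⬝ᵥ S.dir j : ℤ) : ℝ) = S.len k - 1 := by push_cast; linarith
    exact_mod_cast h
  · have := T.dotZ_normal_le m _ (S.isVertexOf_nbr j).mem
    rw [S.dotZ_nbr, hx] at this
    exact_mod_cast (by linarith : (S.len j : ℝ) * (T.normal m ⬝ᵥ S.dir j : ℤ) ≤ S.len k)

lemma eq_zero_of_add_eq_two_smul_normal {φ ψ : Fin n → ℤ} {m : Fin n} (hφ : dotZ φ x = 1)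
    (hψ : dotZ ψ x = 1) (hφP : ∀ y ∈ P, dotZ φ y ≤ 1) (hψP : ∀ y ∈ P, dotZ ψ y ≤ 1)
    (h : φ + ψ = (2 : ℤ) • S.normal m) (hm : φ ⬝ᵥ S.dir m = 0) : φ = 0 := by
  refine S.ext_of_dotProduct_dir fun j => ?_
  rcases eq_or_ne m j with rfl | hmj
  · simpa using hm
  have hsum := congrArg (· ⬝ᵥ S.dir j) h
  simp only [add_dotProduct, smul_dotProduct, S.normal_dotProduct_dir, if_neg hmj,
    smul_zero] at hsum
  have := S.dotProduct_dir_nonpos hφ hφP j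
  have := S.dotProduct_dir_nonpos hψ hψP j
  simp only [zero_dotProduct]
  omega

lemma len_le_add_one (hP : IsMonotonePolytope P) (hx : IsVertexOf P x)
    (hlong : ∀ j, n ≤ S.len j) (k : Fin n) : S.len k ≤ n + 1 := by
  by_contra! hk
  obtain ⟨T, m, hm⟩ := S.exists_dir_eq_neg hP hx k
  obtain ⟨hUk, hUx, hUsum, hUle⟩ := S.opposite_normal hm
  obtain ⟨hLk, hβ⟩ := opposite_weights_of_long_edge hlong hk hUk hUsum hUle
  have : Nontrivial (Fin n) := Fin.nontrivial_iff_two_le.2 (by omega)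
  obtain ⟨k₁, hk₁⟩ := exists_ne k
  obtain ⟨R, m₁, hm₁⟩ := S.exists_dir_eq_neg hP hx k₁
  obtain ⟨-, -, hU'sum, hU'le⟩ := S.opposite_normal hm₁
  have hβ' := opposite_weights_of_short_edge hLk (fun j hj => (hβ j hj).2)
    (by rw [hU'sum, (hβ k₁ hk₁).2]) (fun j => (hβ k₁ hk₁).2 ▸ hU'le j)
  have hsum : S.normal k + T.normal m = (2 : ℤ) • R.normal m₁ := by
    refine S.ext_of_dotProduct_dir fun j => ?_
    simp only [add_dotProduct, smul_dotProduct, S.normal_dotProduct_dir, congrFun hβ' j]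
    rcases eq_or_ne j k with rfl | hj
    · simp [hUk]
    · simp [hj, hj.symm, (hβ j hj).1]
  have hzero := R.eq_zero_of_add_eq_two_smul_normal ?_ ?_ (S.dotZ_normal_le k)
    (T.dotZ_normal_le m) hsum ?_
  · simpa [hzero] using S.normal_dotProduct_dir k k
  · simp [S.dotZ_nbr, S.dotZ_normal_self, S.normal_dotProduct_dir, hk₁.symm]
  · rw [S.dotZ_nbr, hUx, (hβ k₁ hk₁).1, (hβ k₁ hk₁).2, hLk]
    push_cast
    ring
  · simp [hm₁, dotProduct_neg, S.normal_dotProduct_dir, hk₁.symm]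

end VertexChart

/-- Lemma 4.3: if every edge of a monotone polytope `P ⊆ ℝ^n`
incident to a vertex `v` has lattice length at least `n`, then every such edge
has lattice length `n` or `n + 1`. -/
theorem edge_lengths_at_blowupable_vertex {n : ℕ} (P : Set (Fin n → ℝ))
    (hP : IsMonotonePolytope P) (v : Fin n → ℝ) (hv : IsVertexOf P v)
    (hlong : ∀ w ℓ, IsVertexOf P w → IsEdgeOf P (segment ℝ v w) →
      LatticeLength v w ℓ → n ≤ ℓ) :
    ∀ w ℓ, IsVertexOf P w → IsEdgeOf P (segment ℝ v w) →
      LatticeLength v w ℓ → ℓ = n ∨ ℓ = n + 1 := by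
  intro w ℓ hw hedge hlen
  obtain ⟨S⟩ := VertexChart.nonempty hP hv
  obtain ⟨k, rfl⟩ := S.exists_nbr_eq hw hedge
  obtain rfl := hlen.eq_of_eq_add (S.dir_primitive k) (S.nbr_eq k)
  have hS : ∀ j, n ≤ S.len j := fun j =>
    hlong _ _ (S.isVertexOf_nbr j) (S.isEdgeOf_segment_nbr j) (S.latticeLength_nbr j)
  have := S.len_le_add_one hP hv hS k
  have := hS k
  omega
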